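/- arXiv:1111.5159 — 2 statements merged into one kernel-verified Lean document; each statement's English description precedes it below -/
import Mathlib

section
/- For any finite sets A, B of real numbers, E_{1.5}(A)^2 · |B|^2 ≤ E_3(A)^{2/3} · E_3(B)^{1/3} · E(A, A+B), where E_3(X) = Σ_s δ_X(s)^3, E_{1.5}(A) = Σ_s δ_A(s)^{3/2}, and E(A,C) = Σ_s δ_A(s)δ_C(s) is the additive energy. -/
open Finset Pointwise

noncomputable def dlt (X Y : Finset ℝ) (s : ℝ) : ℕ :=
  ((X ×ˢ Y).filter (fun p => p.1 - p.2 = s)).card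

noncomputable def sg (X Y : Finset ℝ) (s : ℝ) : ℕ :=
  ((X ×ˢ Y).filter (fun p => p.1 + p.2 = s)).card

noncomputable def En (X Y : Finset ℝ) : ℝ :=
  ∑ s ∈ X - X, (dlt X X s : ℝ) * (dlt Y Y s : ℝ)

noncomputable def E3 (X : Finset ℝ) : ℝ :=
  ∑ s ∈ X - X, (dlt X X s : ℝ) ^ 3

noncomputable def E15 (X : Finset ℝ) : ℝ :=
  ∑ s ∈ X - X, (dlt X X s : ℝ) ^ ((3 : ℝ) / 2)

/-!
For `u, v ∈ A + B` let `r(u, v)` count the `b ∈ B` with `u - b, v - b ∈ A`. Translating by `b`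
gives `∑ r(u, v) f(u - v) = |B| ∑_{a, a' ∈ A} f(a - a')`, hence
`E_{1.5}(A) |B| = ∑ r(u, v) δ_A(u - v)^{1/2}`. By Cauchy–Schwarz its square is at most
`∑ δ_A(u - v) · ∑ r(u, v)^2 = E(A, A + B) · ∑_{b, b' ∈ B} δ_A(b - b')^2`,
and the last sum is `∑_s δ_B(s) δ_A(s)^2 ≤ E_3(A)^{2/3} E_3(B)^{1/3}` by Hölder.
-/

lemma dlt_eq_zero_of_notMem {X Y : Finset ℝ} {s : ℝ} (h : s ∉ X - Y) : dlt X Y s = 0 := by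
  rw [dlt, card_eq_zero, filter_eq_empty_iff]
  rintro ⟨x, y⟩ hxy rfl
  exact h (sub_mem_sub (mem_product.1 hxy).1 (mem_product.1 hxy).2)

lemma sum_product_sub_eq_sum_dlt_mul (C : Finset ℝ) (f : ℝ → ℝ) {D : Finset ℝ}
    (hD : C - C ⊆ D) :
    ∑ p ∈ C ×ˢ C, f (p.1 - p.2) = ∑ s ∈ D, (dlt C C s : ℝ) * f s := by
  rw [sum_comp f (fun p : ℝ × ℝ => p.1 - p.2), image_sub_product]
  simp only [nsmul_eq_mul]
  refine sum_subset hD fun s _ hs => ?_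
  rw [← dlt, dlt_eq_zero_of_notMem hs, Nat.cast_zero, zero_mul]

lemma E15_eq_sum_sqrt (X : Finset ℝ) :
    E15 X = ∑ p ∈ X ×ˢ X, √(dlt X X (p.1 - p.2) : ℝ) := by
  rw [sum_product_sub_eq_sum_dlt_mul X (fun s => √(dlt X X s : ℝ)) subset_rfl, E15]
  refine sum_congr rfl fun s _ => ?_
  rw [Real.sqrt_eq_rpow, ← Real.rpow_one_add' (Nat.cast_nonneg _) (by norm_num)]
  norm_num

lemma En_eq_sum_product (X Y : Finset ℝ) :
    En X Y = ∑ p ∈ Y ×ˢ Y, (dlt X X (p.1 - p.2) : ℝ) := by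
  rw [sum_product_sub_eq_sum_dlt_mul Y (fun s => (dlt X X s : ℝ))
      (subset_union_right (s₁ := X - X)),
    En, sum_subset subset_union_left fun s _ hs => by simp [dlt_eq_zero_of_notMem hs]]
  exact sum_congr rfl fun _ _ => mul_comm _ _

lemma sum_mul_sq_le_rpow_mul_rpow {ι : Type*} (S : Finset ι) {f g : ι → ℝ}
    (hf : ∀ i ∈ S, 0 ≤ f i) (hg : ∀ i ∈ S, 0 ≤ g i) :
    ∑ i ∈ S, g i * f i ^ 2 ≤
      (∑ i ∈ S, f i ^ 3) ^ ((2 : ℝ) / 3) * (∑ i ∈ S, g i ^ 3) ^ ((1 : ℝ) / 3) := by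
  have holder := Real.inner_le_Lp_mul_Lq_of_nonneg S (f := fun i => f i ^ 2) (g := g)
    (Real.holderConjugate_iff.mpr ⟨by norm_num, by norm_num⟩ : Real.HolderConjugate (3 / 2) 3)
    (fun i _ => sq_nonneg (f i)) hg
  have hf3 : ∀ i ∈ S, (f i ^ 2) ^ ((3 : ℝ) / 2) = f i ^ 3 := fun i hi => by
    rw [← Real.rpow_natCast, ← Real.rpow_mul (hf i hi)]
    norm_num
  have hg3 : ∀ i ∈ S, g i ^ (3 : ℝ) = g i ^ 3 := fun i _ => by
    exact_mod_cast Real.rpow_natCast (g i) 3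
  rw [sum_congr rfl hf3, sum_congr rfl hg3, show 1 / ((3 : ℝ) / 2) = 2 / 3 by norm_num] at holder
  calc ∑ i ∈ S, g i * f i ^ 2 = ∑ i ∈ S, f i ^ 2 * g i :=
        sum_congr rfl fun _ _ => mul_comm _ _
    _ ≤ _ := holder

lemma sum_product_dlt_sq_le (A B : Finset ℝ) :
    ∑ q ∈ B ×ˢ B, (dlt A A (q.1 - q.2) : ℝ) ^ 2 ≤
      E3 A ^ ((2 : ℝ) / 3) * E3 B ^ ((1 : ℝ) / 3) := by
  have hE3 : ∀ X, X - X ⊆ (A - A) ∪ (B - B) →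
      E3 X = ∑ s ∈ (A - A) ∪ (B - B), (dlt X X s : ℝ) ^ 3 := fun X hX =>
    sum_subset hX fun s _ hs => by simp [dlt_eq_zero_of_notMem hs]
  rw [sum_product_sub_eq_sum_dlt_mul B (fun s => (dlt A A s : ℝ) ^ 2) subset_union_right,
    hE3 A subset_union_left, hE3 B subset_union_right]
  exact sum_mul_sq_le_rpow_mul_rpow _ (fun _ _ => Nat.cast_nonneg _)
    (fun _ _ => Nat.cast_nonneg _)

section CommonShifts

variable {G : Type*} [AddCommGroup G] [DecidableEq G]

def commonShifts (A B : Finset G) (p : G × G) : Finset G :=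
  {b ∈ B | p.1 - b ∈ A ∧ p.2 - b ∈ A}

lemma sum_card_commonShifts_smul {M : Type*} [AddCommMonoid M] (A B : Finset G) (f : G → M) :
    ∑ p ∈ (A + B) ×ˢ (A + B), #(commonShifts A B p) • f (p.1 - p.2) =
      #B • ∑ q ∈ A ×ˢ A, f (q.1 - q.2) := by
  simp_rw [← sum_const, commonShifts]
  rw [sum_comm' (t' := B) (s' := fun b => (A ×ˢ A).map (Equiv.addRight (b, b)).toEmbedding)]
  · refine sum_congr rfl fun b _ => ?_
    simp [sum_map]
  · rintro ⟨u, v⟩ b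
    simp only [mem_product, mem_filter, mem_map_equiv, Equiv.addRight_symm, Equiv.coe_addRight,
      ← sub_eq_add_neg]
    constructor
    · rintro ⟨-, hb, hu, hv⟩
      exact ⟨⟨hu, hv⟩, hb⟩
    · rintro ⟨⟨hu, hv⟩, hb⟩
      exact ⟨⟨by simpa using add_mem_add hu hb, by simpa using add_mem_add hv hb⟩,
        hb, hu, hv⟩

lemma card_filter_sub_mem_and_sub_mem {A B : Finset G} {b : G} (hb : b ∈ B) (b' : G) :
    #{u ∈ A + B | u - b ∈ A ∧ u - b' ∈ A} = #{x ∈ A ×ˢ A | x.1 - x.2 = b - b'} := by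
  refine card_nbij' (fun u => (u - b', u - b)) (fun x => x.2 + b) ?_ ?_ ?_ ?_
  · intro u hu
    simp only [coe_filter, Set.mem_ofPred_eq, mem_product] at hu ⊢
    exact ⟨⟨hu.2.2, hu.2.1⟩, by abel⟩
  · rintro ⟨x, y⟩ hxy
    simp only [coe_filter, Set.mem_ofPred_eq, mem_product] at hxy ⊢
    obtain ⟨⟨hx, hy⟩, hs⟩ := hxy
    refine ⟨add_mem_add hy hb, by simpa using hy, ?_⟩
    rwa [show y + b - b' = x by rw [add_sub_assoc, ← hs]; abel]
  · intro u _
    simp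
  · rintro ⟨x, y⟩ hxy
    simp only [coe_filter, Set.mem_ofPred_eq, mem_product] at hxy
    simp [show y + b - b' = x by rw [add_sub_assoc, ← hxy.2]; abel]

lemma sum_card_commonShifts_sq (A B : Finset G) :
    ∑ p ∈ (A + B) ×ˢ (A + B), #(commonShifts A B p) ^ 2 =
      ∑ q ∈ B ×ˢ B, #{x ∈ A ×ˢ A | x.1 - x.2 = q.1 - q.2} ^ 2 := by
  have hsq : ∀ p, #(commonShifts A B p) ^ 2 =
      ∑ q ∈ commonShifts A B p ×ˢ commonShifts A B p, 1 := fun p => by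
    rw [sq, ← card_product, card_eq_sum_ones]
  rw [sum_congr rfl fun p _ => hsq p, sum_comm' (t' := B ×ˢ B)
    (s' := fun q => {u ∈ A + B | u - q.1 ∈ A ∧ u - q.2 ∈ A} ×ˢ
      {u ∈ A + B | u - q.1 ∈ A ∧ u - q.2 ∈ A})]
  · refine sum_congr rfl fun q hq => ?_
    rw [← card_eq_sum_ones, card_product,
      card_filter_sub_mem_and_sub_mem (mem_product.1 hq).1, sq]
  · intro p q
    simp only [commonShifts, mem_product, mem_filter]
    tauto

end CommonShifts

theorem stmt1 (A B : Finset ℝ) :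
    (E15 A) ^ 2 * (B.card : ℝ) ^ 2 ≤
      (E3 A) ^ ((2 : ℝ) / 3) * (E3 B) ^ ((1 : ℝ) / 3) * En A (A + B) := by
  set w : ℝ × ℝ → ℝ := fun p => √(dlt A A (p.1 - p.2) : ℝ)
  set c : ℝ × ℝ → ℝ := fun p => (#(commonShifts A B p) : ℝ)
  have hE15 : E15 A * #B = ∑ p ∈ (A + B) ×ˢ (A + B), w p * c p := by
    rw [E15_eq_sum_sqrt, mul_comm, ← nsmul_eq_mul,
      ← sum_card_commonShifts_smul A B (fun s => √(dlt A A s : ℝ))]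
    simp only [w, c, nsmul_eq_mul, mul_comm]
  have hw : ∑ p ∈ (A + B) ×ˢ (A + B), w p ^ 2 = En A (A + B) := by
    simp only [w, Real.sq_sqrt (Nat.cast_nonneg _), En_eq_sum_product]
  have hc : ∑ p ∈ (A + B) ×ˢ (A + B), c p ^ 2 ≤
      E3 A ^ ((2 : ℝ) / 3) * E3 B ^ ((1 : ℝ) / 3) := by
    refine le_of_eq_of_le ?_ (sum_product_dlt_sq_le A B)
    simp only [c, dlt]
    exact_mod_cast sum_card_commonShifts_sq A B
  calc E15 A ^ 2 * #B ^ 2 = (∑ p ∈ (A + B) ×ˢ (A + B), w p * c p) ^ 2 := by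
        rw [← hE15]; ring
    _ ≤ (∑ p ∈ (A + B) ×ˢ (A + B), w p ^ 2) * ∑ p ∈ (A + B) ×ˢ (A + B), c p ^ 2 :=
      sum_mul_sq_le_sq_mul_sq _ _ _
    _ ≤ (∑ p ∈ (A + B) ×ˢ (A + B), w p ^ 2) *
          (E3 A ^ ((2 : ℝ) / 3) * E3 B ^ ((1 : ℝ) / 3)) := by
      gcongr
    _ = E3 A ^ ((2 : ℝ) / 3) * E3 B ^ ((1 : ℝ) / 3) * En A (A + B) := by rw [hw]; ring
end

section
/- For any finite sets A, C ⊂ ℝ and finite F ⊂ ℝ, if E(A,F) denotes additive energy, then |A|^8 / |A−A| ≤ E_3(A) · E(A, A−A), where E_3(A) = Σ_s δ_A(s)^3 and E(A, A−A) = Σ_s δ_A(s)δ_{A−A}(s). -/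
/-!
Write δ(s) = |A ∩ (A + s)| and δ(s, t) = |A ∩ (A + s) ∩ (A + t)|. Hölder's inequality with exponent
3/2 applied to Σ_s δ(s) = |A|² gives |A|⁶ ≤ E_{3/2}(A)² |A − A|. On the other hand
|A| E_{3/2}(A) = Σ_{s,t} δ(s)^{1/2} δ(s, t), and Cauchy–Schwarz bounds its square by
Σ_{s,t} δ(s, t)² = E_3(A) times Σ_s δ(s) #{t : δ(s, t) ≠ 0} ≤ E(A, A − A); the last step holds
because δ(s, t) ≠ 0 forces both t and t − s into A − A.
-/

open Finset Pointwise

/-- Both sides count the closed walks `a b a' b'` of length four in the bipartite relation `r`. -/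
theorem sum_sum_sq_card_filter_comm {α β : Type*} (s : Finset α) (t : Finset β)
    (r : α → β → Prop) [∀ a b, Decidable (r a b)] :
    ∑ a ∈ s, ∑ a' ∈ s, #{b ∈ t | r a b ∧ r a' b} ^ 2
      = ∑ b ∈ t, ∑ b' ∈ t, #{a ∈ s | r a b ∧ r a b'} ^ 2 := by
  simp only [card_filter, sq, sum_mul_sum, ← sum_product' s s, ← sum_product' t t]
  rw [sum_comm]
  refine sum_congr rfl fun _ _ => sum_congr rfl fun _ _ => ?_
  simp only [ite_zero_mul_ite_zero, mul_one, and_and_and_comm]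

theorem sum_pow_three_le_sq_sum_rpow_mul_card {ι : Type*} (s : Finset ι) (f : ι → ℝ)
    (hf : ∀ i, 0 ≤ f i) :
    (∑ i ∈ s, f i) ^ 3 ≤ (∑ i ∈ s, f i ^ ((3 : ℝ) / 2)) ^ 2 * #s := by
  have holder := Real.inner_le_weight_mul_Lp_of_nonneg s (p := 3 / 2) (by norm_num)
    (fun _ => 1) f (fun _ => zero_le_one) hf
  simp only [one_mul, sum_const, nsmul_eq_mul, mul_one] at holder
  have hE : 0 ≤ ∑ i ∈ s, f i ^ ((3 : ℝ) / 2) := sum_nonneg fun i _ => by have := hf i; positivity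
  calc (∑ i ∈ s, f i) ^ 3
      ≤ ((#s : ℝ) ^ (1 - (3 / 2 : ℝ)⁻¹) * (∑ i ∈ s, f i ^ ((3 : ℝ) / 2)) ^ (3 / 2 : ℝ)⁻¹) ^ 3 :=
        pow_le_pow_left₀ (sum_nonneg fun i _ => hf i) holder 3
    _ = _ := by
      rw [mul_pow, ← Real.rpow_mul_natCast (by positivity), ← Real.rpow_mul_natCast hE]
      norm_num
      ring

theorem dlt_eq_card_filter (X Y : Finset ℝ) (s : ℝ) : dlt X Y s = #{x ∈ X | x - s ∈ Y} := by
  refine card_nbij' Prod.fst (fun x => (x, x - s)) ?_ ?_ ?_ fun _ _ => rfl <;> intro p hp <;>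
    simp only [coe_filter, mem_product, Set.mem_ofPred_eq] at hp <;> grind

theorem sum_product_sub_eq_sum_dlt_smul {M : Type*} [AddCommMonoid M] {X Y S : Finset ℝ}
    (h : X - Y ⊆ S) (f : ℝ → M) :
    ∑ p ∈ X ×ˢ Y, f (p.1 - p.2) = ∑ s ∈ S, dlt X Y s • f s := by
  have hmaps : ∀ p ∈ X ×ˢ Y, p.1 - p.2 ∈ S := fun p hp =>
    h (sub_mem_sub (mem_product.1 hp).1 (mem_product.1 hp).2)
  rw [← sum_fiberwise_of_maps_to hmaps]
  refine sum_congr rfl fun s _ => ?_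
  rw [dlt, ← sum_const]
  exact sum_congr rfl fun p hp => by rw [(mem_filter.1 hp).2]

theorem sum_dlt_of_subset {X Y S : Finset ℝ} (h : X - Y ⊆ S) :
    ∑ s ∈ S, dlt X Y s = #X * #Y := by
  simpa [card_product] using (sum_product_sub_eq_sum_dlt_smul (M := ℕ) h fun _ => 1).symm

noncomputable def dltPair (A : Finset ℝ) (s t : ℝ) : ℕ := #{x ∈ A | x - s ∈ A ∧ x - t ∈ A}

theorem sum_dltPair_right (A : Finset ℝ) (s : ℝ) :
    ∑ t ∈ A - A, dltPair A s t = dlt A A s * #A := by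
  have h : {x ∈ A | x - s ∈ A} - A ⊆ A - A := sub_subset_sub (filter_subset _ _) subset_rfl
  rw [dlt_eq_card_filter, ← sum_dlt_of_subset h]
  refine sum_congr rfl fun t _ => ?_
  rw [dltPair, dlt_eq_card_filter, filter_filter]

theorem card_filter_sub_mem_sub_mem (A : Finset ℝ) {x : ℝ} (hx : x ∈ A) (y : ℝ) :
    #{s ∈ A - A | x - s ∈ A ∧ y - s ∈ A} = dlt A A (x - y) := by
  rw [dlt_eq_card_filter]
  refine card_nbij' (x - ·) (x - ·) ?_ ?_ ?_ ?_ <;> intro u hu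
  all_goals simp only [coe_filter, Set.mem_ofPred_eq] at hu ⊢
  · grind
  · refine ⟨mem_sub.2 ⟨x, hx, u, hu.1, rfl⟩, ?_⟩
    grind
  · ring
  · ring

theorem sum_sum_dltPair_sq (A : Finset ℝ) :
    ∑ s ∈ A - A, ∑ t ∈ A - A, dltPair A s t ^ 2 = ∑ u ∈ A - A, dlt A A u ^ 3 := calc
  _ = ∑ x ∈ A, ∑ y ∈ A, #{s ∈ A - A | x - s ∈ A ∧ y - s ∈ A} ^ 2 :=
    sum_sum_sq_card_filter_comm _ _ fun s x => x - s ∈ A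
  _ = ∑ p ∈ A ×ˢ A, dlt A A (p.1 - p.2) ^ 2 := by
    rw [sum_product]
    exact sum_congr rfl fun x hx => sum_congr rfl fun y _ => by
      rw [card_filter_sub_mem_sub_mem A hx]
  _ = ∑ u ∈ A - A, dlt A A u ^ 3 := by
    rw [sum_product_sub_eq_sum_dlt_smul subset_rfl fun u => dlt A A u ^ 2]
    exact sum_congr rfl fun u _ => by rw [smul_eq_mul]; ring

theorem card_filter_dltPair_ne_zero_le (A : Finset ℝ) (s : ℝ) :
    #{t ∈ A - A | dltPair A s t ≠ 0} ≤ dlt (A - A) (A - A) s := by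
  rw [dlt_eq_card_filter]
  refine card_le_card fun t ht => ?_
  obtain ⟨htD, hT⟩ := mem_filter.1 ht
  obtain ⟨x, hx⟩ := card_ne_zero.1 hT
  simp only [mem_filter] at hx ⊢
  exact ⟨htD, mem_sub.2 ⟨x - s, hx.2.1, x - t, hx.2.2, by ring⟩⟩

theorem E15_eq_sum_mul_sqrt (A : Finset ℝ) :
    E15 A = ∑ s ∈ A - A, (dlt A A s : ℝ) * √(dlt A A s) := by
  refine sum_congr rfl fun s _ => ?_
  rw [Real.sqrt_eq_rpow, ← Real.rpow_one_add' (Nat.cast_nonneg _) (by norm_num)]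
  norm_num

theorem card_pow_six_le_E15_sq_mul_card (A : Finset ℝ) :
    (#A : ℝ) ^ 6 ≤ E15 A ^ 2 * #(A - A) := by
  have hmass : ∑ s ∈ A - A, (dlt A A s : ℝ) = #A ^ 2 := by
    exact_mod_cast (sum_dlt_of_subset subset_rfl).trans (sq _).symm
  have := sum_pow_three_le_sq_sum_rpow_mul_card (A - A) (fun s => (dlt A A s : ℝ))
    fun _ => Nat.cast_nonneg _
  rw [hmass, ← pow_mul] at this
  exact this

theorem E15_sq_mul_card_sq_le (A : Finset ℝ) :
    E15 A ^ 2 * (#A : ℝ) ^ 2 ≤ E3 A * En A (A - A) := by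
  have hsum : E15 A * #A
      = ∑ p ∈ (A - A) ×ˢ (A - A), √(dlt A A p.1 : ℝ) * dltPair A p.1 p.2 := by
    rw [E15_eq_sum_mul_sqrt, sum_mul]
    simp only [sum_product]
    refine sum_congr rfl fun s _ => ?_
    have hrow : ∑ t ∈ A - A, (dltPair A s t : ℝ) = dlt A A s * #A := by
      exact_mod_cast sum_dltPair_right A s
    rw [← mul_sum, hrow]
    ring
  have hsq : ∑ p ∈ (A - A) ×ˢ (A - A), (dltPair A p.1 p.2 : ℝ) ^ 2 = E3 A := by
    simp only [sum_product]
    rw [E3]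
    exact_mod_cast sum_sum_dltPair_sq A
  have hsupp : ∑ p ∈ (A - A) ×ˢ (A - A), (if dltPair A p.1 p.2 ≠ 0 then (dlt A A p.1 : ℝ) else 0)
      ≤ En A (A - A) := by
    simp only [sum_product]
    refine sum_le_sum fun s _ => ?_
    rw [← sum_filter, sum_const, nsmul_eq_mul, mul_comm]
    gcongr
    exact_mod_cast card_filter_dltPair_ne_zero_le A s
  have cs := sum_sq_le_sum_mul_sum_of_sq_le_mul ((A - A) ×ˢ (A - A))
    (r := fun p => √(dlt A A p.1 : ℝ) * dltPair A p.1 p.2)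
    (f := fun p => if dltPair A p.1 p.2 ≠ 0 then (dlt A A p.1 : ℝ) else 0)
    (g := fun p => (dltPair A p.1 p.2 : ℝ) ^ 2)
    (fun p _ => by positivity) (fun p _ => by positivity) fun p _ => by
      split_ifs with h
      · rw [mul_pow, Real.sq_sqrt (Nat.cast_nonneg _)]
      · simp [not_not.1 h]
  calc E15 A ^ 2 * (#A : ℝ) ^ 2 = (E15 A * #A) ^ 2 := by ring
    _ ≤ En A (A - A) * E3 A := by
      rw [hsum, ← hsq]
      exact cs.trans (mul_le_mul_of_nonneg_right hsupp (sum_nonneg fun p _ => sq_nonneg _))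
    _ = E3 A * En A (A - A) := mul_comm _ _

theorem stmt19 (A : Finset ℝ) :
    (A.card : ℝ) ^ 8 / ((A - A).card : ℝ) ≤ E3 A * En A (A - A) := by
  calc (#A : ℝ) ^ 8 / #(A - A) ≤ E15 A ^ 2 * (#A : ℝ) ^ 2 := by
        refine div_le_of_le_mul₀ (Nat.cast_nonneg _) (by positivity) ?_
        calc (#A : ℝ) ^ 8 = (#A : ℝ) ^ 6 * (#A : ℝ) ^ 2 := by ring
          _ ≤ E15 A ^ 2 * #(A - A) * (#A : ℝ) ^ 2 := by
            gcongr
            exact card_pow_six_le_E15_sq_mul_card A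
          _ = _ := by ring
    _ ≤ E3 A * En A (A - A) := E15_sq_mul_card_sq_le A
end
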